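/- For any two finite simple graphs G1 and G2 (on disjoint vertex sets), the inductive dimension of their join satisfies dim(G1 + G2) = 1 + dim G1 + dim G2. -/

import Mathlib

open Classical in
/-- The Knill inductive dimension of the subgraph of `G` induced on the
finite vertex set `A`: the empty graph has dimension `-1`, and otherwise
`dim = (1/|A|) · Σ_{v ∈ A} (1 + dim S(v))`, where the sphere `S(v)` is the
induced subgraph on the neighbors of `v` inside `A`. -/
noncomputable def gdim {V : Type*} (G : SimpleGraph V) (A : Finset V) : ℚ :=
  if A.card = 0 then -1
  else (A.card : ℚ)⁻¹ *
    ∑ v ∈ A.attach, (1 + gdim G (A.filter (fun u => G.Adj v.1 u)))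
termination_by A.card
decreasing_by
  apply Finset.card_lt_card
  refine ⟨Finset.filter_subset _ _, fun hsub => ?_⟩
  have hv := hsub v.2
  rw [Finset.mem_filter] at hv
  exact G.loopless.irrefl v.1 hv.2

open Classical in
lemma gdim_empty {V : Type*} (G : SimpleGraph V) : gdim G (∅ : Finset V) = -1 := by
  rw [gdim]; simp

open Classical in
lemma gdim_eq {V : Type*} (G : SimpleGraph V) (A : Finset V) (h : A.Nonempty) :
    (A.card : ℚ) * gdim G A = ∑ v ∈ A, (1 + gdim G (A.filter (fun u => G.Adj v u))) := by
  rw [gdim, if_neg (by simpa using h.card_pos.ne')]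
  rw [← Finset.sum_attach A (fun v => 1 + gdim G (A.filter (fun u => G.Adj v u)))]
  rw [← mul_assoc, mul_inv_cancel₀ (Nat.cast_ne_zero.2 h.card_pos.ne'), one_mul]

open Classical in
lemma dim_join_aux {V : Type*} [DecidableEq V] (G : SimpleGraph V) :
    ∀ n (A B : Finset V), A.card + B.card ≤ n → Disjoint A B →
    (∀ a ∈ A, ∀ b ∈ B, G.Adj a b) →
    gdim G (A ∪ B) = 1 + gdim G A + gdim G B := by
  intro n
  induction n with
  | zero =>
    intro A B h _ _
    have hA : A = ∅ := Finset.card_eq_zero.1 (by omega)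
    have hB : B = ∅ := Finset.card_eq_zero.1 (by omega)
    subst hA; subst hB
    simp [gdim_empty]
  | succ n ih =>
    intro A B h hdisj hjoin
    rcases A.eq_empty_or_nonempty with hA | hA
    · subst hA; simp [gdim_empty]
    rcases B.eq_empty_or_nonempty with hB | hB
    · subst hB; simp [gdim_empty]
    have hAB : (A ∪ B).Nonempty := hA.mono Finset.subset_union_left
    have hcard : (A ∪ B).card = A.card + B.card := Finset.card_union_of_disjoint hdisj
    have ha0 : (A.card : ℚ) ≠ 0 := Nat.cast_ne_zero.2 hA.card_pos.ne'
    have hb0 : (B.card : ℚ) ≠ 0 := Nat.cast_ne_zero.2 hB.card_pos.ne'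
    -- sum over A
    have hsumA : ∀ v ∈ A,
        1 + gdim G ((A ∪ B).filter (fun u => G.Adj v u))
          = (1 + gdim G (A.filter (fun u => G.Adj v u))) + (1 + gdim G B) := by
      intro v hv
      have hfil : (A ∪ B).filter (fun u => G.Adj v u)
          = A.filter (fun u => G.Adj v u) ∪ B := by
        rw [Finset.filter_union, Finset.filter_true_of_mem (fun b hb => hjoin v hv b hb)]
      rw [hfil, ih _ _ ?_ (hdisj.mono_left (Finset.filter_subset _ _))
        (fun a ha b hb => hjoin a (Finset.filter_subset _ _ ha) b hb)]
      · ring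
      · have hlt : (A.filter (fun u => G.Adj v u)).card < A.card := by
          apply Finset.card_lt_card
          refine Finset.ssubset_iff_of_subset (Finset.filter_subset _ _) |>.2 ⟨v, hv, ?_⟩
          simp [G.loopless.irrefl v]
        omega
    have hsumB : ∀ v ∈ B,
        1 + gdim G ((A ∪ B).filter (fun u => G.Adj v u))
          = (1 + gdim G (B.filter (fun u => G.Adj v u))) + (1 + gdim G A) := by
      intro v hv
      have hfil : (A ∪ B).filter (fun u => G.Adj v u)
          = A ∪ B.filter (fun u => G.Adj v u) := by
        rw [Finset.filter_union, Finset.filter_true_of_mem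
          (fun a ha => (hjoin a ha v hv).symm)]
      rw [hfil, ih _ _ ?_ (hdisj.mono_right (Finset.filter_subset _ _))
        (fun a ha b hb => hjoin a ha b (Finset.filter_subset _ _ hb))]
      · ring
      · have hlt : (B.filter (fun u => G.Adj v u)).card < B.card := by
          apply Finset.card_lt_card
          refine Finset.ssubset_iff_of_subset (Finset.filter_subset _ _) |>.2 ⟨v, hv, ?_⟩
          simp [G.loopless.irrefl v]
        omega
    have key := gdim_eq G (A ∪ B) hAB
    rw [Finset.sum_union hdisj, Finset.sum_congr rfl hsumA, Finset.sum_congr rfl hsumB] at key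
    have eA := gdim_eq G A hA
    have eB := gdim_eq G B hB
    simp only [Finset.sum_add_distrib, Finset.sum_const, nsmul_eq_mul, mul_one] at key eA eB
    have hABcard : ((A ∪ B).card : ℚ) ≠ 0 := Nat.cast_ne_zero.2 hAB.card_pos.ne'
    rw [← eA, ← eB] at key
    apply mul_left_cancel₀ hABcard
    rw [key, hcard]
    push_cast
    ring

/-- For two finite simple graphs on disjoint vertex sets —
realized as the induced subgraphs `G[A]` and `G[B]` of an ambient graph `G`
on disjoint finite vertex sets `A` and `B` in which every vertex of `A` is
adjacent to every vertex of `B` (so that `G[A ∪ B]` is exactly their join) —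
the inductive dimension satisfies
`dim(G1 + G2) = 1 + dim G1 + dim G2`. -/
theorem dim_join {V : Type*} [DecidableEq V] (G : SimpleGraph V)
    (A B : Finset V) (hdisj : Disjoint A B)
    (hjoin : ∀ a ∈ A, ∀ b ∈ B, G.Adj a b) :
    gdim G (A ∪ B) = 1 + gdim G A + gdim G B := by
  exact dim_join_aux G (A.card + B.card) A B le_rfl hdisj hjoin
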